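/- arXiv:1404.2655 — 3 statements merged into one kernel-verified Lean document; each statement's English description precedes it below -/
import Mathlib

section
/- Let X ∈ ℝ^{dn×dn} be positive semidefinite with all diagonal d×d blocks X_{ii} = I_{d×d} and rank(X) ≤ d. Then there exist orthogonal matrices O_1,…,O_n ∈ O(d) such that X_{ij} = O_i O_jᵀ for all i,j. -/
/-!
A positive semidefinite matrix of rank at most `d` is a Gram matrix `X = Y Yᵀ` of vectors in
`ℝᵈ`: diagonalise `X = U diag(μ) Uᵀ`, take `Z = U diag(√μ)`, whose only nonzero columns are the
at most `d` columns with `μ ≠ 0`, and pack those columns into `d` coordinates. Cutting `Y` into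
`d × d` row blocks `Yᵢ` gives `Xᵢⱼ = Yᵢ Yⱼᵀ`, and `Xᵢᵢ = I` says each `Yᵢ` is orthogonal.
-/

open Matrix BigOperators

noncomputable def frobSq {α β : Type*} [Fintype α] [Fintype β] (A : Matrix α β ℝ) : ℝ :=
  ∑ i, ∑ j, (A i j) ^ 2

noncomputable def frobNorm {α β : Type*} [Fintype α] [Fintype β] (A : Matrix α β ℝ) : ℝ :=
  Real.sqrt (frobSq A)

/-- The (i,j) d×d block of an (nd)×(nd) matrix. -/
def blk {n d : ℕ} (X : Matrix (Fin n × Fin d) (Fin n × Fin d) ℝ) (i j : Fin n) :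
    Matrix (Fin d) (Fin d) ℝ :=
  fun a b => X (i, a) (j, b)

namespace Matrix

variable {m k s t α : Type*} [Fintype k] [Fintype s] [Fintype t]

theorem submatrix_val_mul_conjTranspose_of_col_eq_zero [NonUnitalNonAssocSemiring α] [StarRing α]
    (Z : Matrix m k α) (p : k → Prop) [DecidablePred p] (hZ : ∀ i c, ¬ p c → Z i c = 0) :
    Z.submatrix id (Subtype.val (p := p)) * (Z.submatrix id (Subtype.val (p := p)))ᴴ =
      Z * Zᴴ := by
  ext i j
  simp only [mul_apply, submatrix_apply, conjTranspose_apply, id]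
  refine (Finset.sum_subtype _ (fun c => Finset.mem_filter_univ c)
    (fun c => Z i c * star (Z j c))).symm.trans (Finset.sum_filter_of_ne fun c _ hc => ?_)
  by_contra h
  exact hc (by rw [hZ i c h, zero_mul])

theorem mul_submatrix_one_mul_conjTranspose [DecidableEq t] [Semiring α] [StarRing α]
    (W : Matrix m s α) (e : s ↪ t) :
    W * (1 : Matrix t t α).submatrix e id * (W * (1 : Matrix t t α).submatrix e id)ᴴ =
      W * Wᴴ := by
  classical
  rw [conjTranspose_mul, conjTranspose_submatrix, conjTranspose_one, Matrix.mul_assoc,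
    ← Matrix.mul_assoc _ _ Wᴴ, ← submatrix_mul _ _ _ _ _ Function.bijective_id, Matrix.one_mul,
    submatrix_one _ e.injective, Matrix.one_mul]

theorem exists_mul_conjTranspose_eq_of_card_le [Semiring α] [StarRing α]
    (Z : Matrix m k α) (p : k → Prop) [DecidablePred p] (hZ : ∀ i c, ¬ p c → Z i c = 0)
    {r : ℕ} (hr : Fintype.card {c // p c} ≤ r) :
    ∃ Y : Matrix m (Fin r) α, Y * Yᴴ = Z * Zᴴ := by
  obtain ⟨e⟩ : Nonempty ({c // p c} ↪ Fin r) :=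
    Function.Embedding.nonempty_of_card_le (by simpa using hr)
  exact ⟨Z.submatrix id Subtype.val * (1 : Matrix (Fin r) (Fin r) α).submatrix e id,
    (mul_submatrix_one_mul_conjTranspose _ e).trans
      (submatrix_val_mul_conjTranspose_of_col_eq_zero Z p hZ)⟩

open scoped ComplexOrder

variable {𝕜 : Type*} [Fintype m] [DecidableEq m] [RCLike 𝕜]

theorem PosSemidef.exists_eq_mul_conjTranspose_of_eigenvalues {A : Matrix m m 𝕜}
    (hA : A.PosSemidef) :
    ∃ Z : Matrix m m 𝕜, (∀ i c, hA.isHermitian.eigenvalues c = 0 → Z i c = 0) ∧ A = Z * Zᴴ := by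
  set μ := hA.isHermitian.eigenvalues
  have hsq : ∀ c, ((√(μ c) : ℝ) : 𝕜) * star ((√(μ c) : ℝ) : 𝕜) = (μ c : 𝕜) := fun c => by
    rw [RCLike.star_def, RCLike.conj_ofReal, ← RCLike.ofReal_mul,
      Real.mul_self_sqrt (hA.eigenvalues_nonneg c)]
  refine ⟨hA.isHermitian.eigenvectorUnitary * diagonal fun c => ((√(μ c) : ℝ) : 𝕜),
    fun i c hc => by simp [mul_diagonal, hc], ?_⟩
  conv_lhs => rw [hA.isHermitian.spectral_theorem, Unitary.conjStarAlgAut_apply]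
  simp only [conjTranspose_mul, diagonal_conjTranspose, Matrix.mul_assoc,
    ← Matrix.mul_assoc (diagonal _), diagonal_mul_diagonal]
  simp only [Pi.star_apply, hsq, star_eq_conjTranspose]
  rfl

theorem PosSemidef.exists_eq_mul_conjTranspose_of_rank_le {A : Matrix m m 𝕜}
    (hA : A.PosSemidef) {r : ℕ} (hr : A.rank ≤ r) :
    ∃ Y : Matrix m (Fin r) 𝕜, A = Y * Yᴴ := by
  obtain ⟨Z, hZ, rfl⟩ := hA.exists_eq_mul_conjTranspose_of_eigenvalues
  obtain ⟨Y, hY⟩ := exists_mul_conjTranspose_eq_of_card_le Z _ (fun i c hc => hZ i c (not_not.1 hc))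
    (hA.isHermitian.rank_eq_card_non_zero_eigs ▸ hr)
  exact ⟨Y, hY.symm⟩

end Matrix

theorem blk_mul_transpose {n d r : ℕ} (Y : Matrix (Fin n × Fin d) (Fin r) ℝ) (i j : Fin n) :
    blk (Y * Yᵀ) i j = Y.submatrix (Prod.mk i) id * (Y.submatrix (Prod.mk j) id)ᵀ :=
  rfl

theorem stmt5 {d n : ℕ} (X : Matrix (Fin n × Fin d) (Fin n × Fin d) ℝ)
    (hpsd : X.PosSemidef) (hdiag : ∀ i, blk X i i = 1) (hrank : X.rank ≤ d) :
    ∃ O : Fin n → Matrix (Fin d) (Fin d) ℝ,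
      (∀ i, O i * (O i)ᵀ = 1) ∧ ∀ i j, blk X i j = O i * (O j)ᵀ := by
  obtain ⟨Y, hY⟩ := hpsd.exists_eq_mul_conjTranspose_of_rank_le hrank
  rw [conjTranspose_eq_transpose_of_trivial] at hY
  refine ⟨fun i => Y.submatrix (Prod.mk i) id, fun i => ?_, fun i j => ?_⟩
  · rw [← blk_mul_transpose, ← hY, hdiag]
  · rw [← blk_mul_transpose, ← hY]
end

section
/- Suppose the matrix C ∈ ℝ^{dn×dn} has blocks C_{ij} = A_i A_jᵀ where A_i = O_i A for a fixed A ∈ ℝ^{d×m} with rank(A) = d and fixed O_1,…,O_n ∈ O(d) (the noiseless case σ = 0). Then X* with blocks X*_{ij} = O_i O_jᵀ is an optimal solution of the SDP max{Tr(CX) : X ⪰ 0, X_{ii} = I}, and its objective value is n² Tr(AAᵀ). -/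
open Matrix BigOperators

/-!
Any feasible `X` is a Gram matrix, `X_{ij} = Y_iᵀ Y_j`. Then `Tr(CX) = ∑_{i,j} ⟨Z_i, Z_j⟩_F` with
`Z_i = Y_i O_i A`, and the constraint `X_{ii} = I` makes every `‖Z_i‖_F² = Tr(AᵀA)`, so
`⟨Z_i, Z_j⟩_F ≤ (‖Z_i‖_F² + ‖Z_j‖_F²) / 2` bounds `Tr(CX)` by `n² Tr(AAᵀ)`. For `X*` one can take
`Y_i = O_iᵀ`, so that every `Z_i = A` and the bound is attained.
-/

section Frobenius

variable {α β γ : Type*} [Fintype α] [Fintype β] [Fintype γ]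

theorem two_mul_trace_transpose_mul_le (P Q : Matrix α β ℝ) :
    2 * (Pᵀ * Q).trace ≤ (Pᵀ * P).trace + (Qᵀ * Q).trace := by
  have h := (posSemidef_conjTranspose_mul_self (P - Q)).trace_nonneg
  have hQP : (Qᵀ * P).trace = (Pᵀ * Q).trace := by
    rw [← trace_transpose, transpose_mul, transpose_transpose]
  rw [conjTranspose_eq_transpose_of_trivial, transpose_sub, Matrix.sub_mul, Matrix.mul_sub,
    Matrix.mul_sub, trace_sub, trace_sub, trace_sub, hQP] at h
  linarith

theorem sum_sum_trace_transpose_mul_le {ι : Type*} [Fintype ι] (Z : ι → Matrix α β ℝ) {t : ℝ}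
    (hZ : ∀ i, ((Z i)ᵀ * Z i).trace = t) :
    ∑ i, ∑ j, ((Z i)ᵀ * Z j).trace ≤ (Fintype.card ι : ℝ) ^ 2 * t := by
  calc ∑ i, ∑ j, ((Z i)ᵀ * Z j).trace
      ≤ ∑ i : ι, ∑ j : ι, (t + t) / 2 := by
        gcongr with i _ j _
        linarith [two_mul_trace_transpose_mul_le (Z i) (Z j), hZ i, hZ j]
    _ = (Fintype.card ι : ℝ) ^ 2 * t := by
        simp only [Finset.sum_const, Finset.card_univ, nsmul_eq_mul]
        ring

theorem trace_transpose_mul_self_mul_of_transpose_mul_self_eq_one [DecidableEq β]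
    {U : Matrix γ β ℝ} (hU : Uᵀ * U = 1) (A : Matrix β α ℝ) :
    ((U * A)ᵀ * (U * A)).trace = (Aᵀ * A).trace := by
  rw [transpose_mul, Matrix.mul_assoc, ← Matrix.mul_assoc Uᵀ, hU, Matrix.one_mul]

end Frobenius

section Blocks

variable {n d : ℕ} {ρ : Type*} [Fintype ρ]

theorem trace_mul_eq_sum_sum_blk (M N : Matrix (Fin n × Fin d) (Fin n × Fin d) ℝ) :
    (M * N).trace = ∑ i, ∑ j, (blk M i j * blk N j i).trace := by
  simp only [trace, diag, mul_apply, blk, Fintype.sum_prod_type]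
  exact Finset.sum_congr rfl fun i _ => Finset.sum_comm

theorem posSemidef_of_blk_eq_transpose_mul {X : Matrix (Fin n × Fin d) (Fin n × Fin d) ℝ}
    (Y : Fin n → Matrix ρ (Fin d) ℝ) (hY : ∀ i j, blk X i j = (Y i)ᵀ * Y j) :
    X.PosSemidef := by
  have hX : X = (of fun r (p : Fin n × Fin d) => Y p.1 r p.2)ᵀ *
      of fun r (p : Fin n × Fin d) => Y p.1 r p.2 := by
    ext ⟨i, a⟩ ⟨j, b⟩
    simpa [blk, mul_apply] using congrFun (congrFun (hY i j) a) b
  rw [hX]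
  exact posSemidef_conjTranspose_mul_self _

open scoped MatrixOrder in
theorem Matrix.PosSemidef.exists_blk_eq_transpose_mul {X : Matrix (Fin n × Fin d) (Fin n × Fin d) ℝ}
    (hX : X.PosSemidef) :
    ∃ Y : Fin n → Matrix (Fin n × Fin d) (Fin d) ℝ, ∀ i j, blk X i j = (Y i)ᵀ * Y j := by
  classical
  obtain ⟨B, rfl⟩ := CStarAlgebra.nonneg_iff_eq_star_mul_self.mp hX.nonneg
  exact ⟨fun i => B.submatrix id (Prod.mk i), fun i j => by ext a b; simp [blk, mul_apply]⟩

theorem trace_mul_eq_sum_sum_of_blk_eq {m : ℕ} {C X : Matrix (Fin n × Fin d) (Fin n × Fin d) ℝ}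
    {V : Fin n → Matrix (Fin d) (Fin m) ℝ} (hC : ∀ i j, blk C i j = V i * (V j)ᵀ)
    {Y : Fin n → Matrix ρ (Fin d) ℝ} (hY : ∀ i j, blk X i j = (Y i)ᵀ * Y j) :
    (C * X).trace = ∑ i, ∑ j, ((Y i * V i)ᵀ * (Y j * V j)).trace := by
  rw [trace_mul_eq_sum_sum_blk, Finset.sum_comm]
  refine Finset.sum_congr rfl fun i _ => Finset.sum_congr rfl fun j _ => ?_
  rw [hC, hY, transpose_mul, Matrix.mul_assoc, trace_mul_comm]
  simp only [Matrix.mul_assoc]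

end Blocks

theorem stmt10_general {d m n : ℕ}
    (A : Matrix (Fin d) (Fin m) ℝ)
    (O : Fin n → Matrix (Fin d) (Fin d) ℝ) (hO : ∀ i, O i * (O i)ᵀ = 1)
    (C : Matrix (Fin n × Fin d) (Fin n × Fin d) ℝ)
    (hC : ∀ i j, blk C i j = (O i * A) * (O j * A)ᵀ)
    (Xstar : Matrix (Fin n × Fin d) (Fin n × Fin d) ℝ)
    (hXstar : ∀ i j, blk Xstar i j = O i * (O j)ᵀ) :
    Xstar.PosSemidef ∧ (∀ i, blk Xstar i i = 1) ∧
    (∀ X : Matrix (Fin n × Fin d) (Fin n × Fin d) ℝ,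
      X.PosSemidef → (∀ i, blk X i i = 1) → (C * X).trace ≤ (C * Xstar).trace) ∧
    (C * Xstar).trace = (n : ℝ) ^ 2 * (A * Aᵀ).trace := by
  have hOt : ∀ i, (O i)ᵀ * O i = 1 := fun i => mul_eq_one_comm.mp (hO i)
  have hXstar' : ∀ i j, blk Xstar i j = ((O i)ᵀ)ᵀ * (O j)ᵀ := by
    simpa only [transpose_transpose] using hXstar
  have hval : (C * Xstar).trace = (n : ℝ) ^ 2 * (A * Aᵀ).trace := by
    simp only [trace_mul_eq_sum_sum_of_blk_eq hC hXstar', ← Matrix.mul_assoc, hOt, Matrix.one_mul,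
      Finset.sum_const, Finset.card_univ, Fintype.card_fin, nsmul_eq_mul, trace_mul_comm Aᵀ]
    ring
  refine ⟨posSemidef_of_blk_eq_transpose_mul _ hXstar', fun i => (hXstar i i).trans (hO i),
    fun X hX hXdiag => ?_, hval⟩
  obtain ⟨Y, hY⟩ := hX.exists_blk_eq_transpose_mul
  have hYO : ∀ i, (Y i * O i)ᵀ * (Y i * O i) = 1 := fun i => by
    rw [transpose_mul, Matrix.mul_assoc, ← Matrix.mul_assoc (Y i)ᵀ, ← hY, hXdiag, Matrix.one_mul, hOt]
  rw [hval, trace_mul_eq_sum_sum_of_blk_eq hC hY, trace_mul_comm A]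
  have hnorm : ∀ i, ((Y i * (O i * A))ᵀ * (Y i * (O i * A))).trace = (Aᵀ * A).trace := by
    intro i
    rw [← Matrix.mul_assoc (Y i)]
    exact trace_transpose_mul_self_mul_of_transpose_mul_self_eq_one (hYO i) A
  simpa only [Fintype.card_fin] using sum_sum_trace_transpose_mul_le _ hnorm

theorem stmt10 {d m n : ℕ}
    (A : Matrix (Fin d) (Fin m) ℝ) (hA : A.rank = d)
    (O : Fin n → Matrix (Fin d) (Fin d) ℝ) (hO : ∀ i, O i * (O i)ᵀ = 1)
    (C : Matrix (Fin n × Fin d) (Fin n × Fin d) ℝ)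
    (hC : ∀ i j, blk C i j = (O i * A) * (O j * A)ᵀ)
    (Xstar : Matrix (Fin n × Fin d) (Fin n × Fin d) ℝ)
    (hXstar : ∀ i j, blk Xstar i j = O i * (O j)ᵀ) :
    Xstar.PosSemidef ∧ (∀ i, blk Xstar i i = 1) ∧
    (∀ X : Matrix (Fin n × Fin d) (Fin n × Fin d) ℝ,
      X.PosSemidef → (∀ i, blk X i i = 1) → (C * X).trace ≤ (C * Xstar).trace) ∧
    (C * Xstar).trace = (n : ℝ) ^ 2 * (A * Aᵀ).trace :=
  stmt10_general A O hO C hC Xstar hXstar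
end

section
/- Let C ∈ ℝ^{dn×dn} be symmetric positive semidefinite with C = BBᵀ where B = [B_1; …; B_n], B_i ∈ ℝ^{d×m}. Then for any feasible X of the SDP (X ⪰ 0, X_{ii} = I), Tr(CX) ≤ (∑_{i=1}^n ‖B_i‖_F)². -/
open Matrix BigOperators

/-! Write the positive semidefinite `X` as `AᵀA` and let `Aᵢ` be the column block of `A` belonging
to block index `i`. The diagonal condition `Xᵢᵢ = I` says `AᵢᵀAᵢ = I`, so left multiplication by `Aᵢ`
preserves the Frobenius norm. Hence `Tr(BBᵀX) = ‖AB‖_F²` with `AB = ∑ᵢ AᵢBᵢ`, and the triangle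
inequality gives `‖AB‖_F ≤ ∑ᵢ ‖AᵢBᵢ‖_F = ∑ᵢ ‖Bᵢ‖_F`. -/

open scoped MatrixOrder

attribute [local instance] Matrix.frobeniusNormedAddCommGroup

section Frobenius

variable {l m p : Type*} [Fintype l] [Fintype m] [Fintype p]

lemma frobSq_eq_trace (M : Matrix m p ℝ) : frobSq M = (Mᵀ * M).trace := by
  simp only [frobSq, trace, diag, mul_apply, transpose_apply, sq]
  exact Finset.sum_comm

lemma frobNorm_eq_norm (M : Matrix m p ℝ) : frobNorm M = ‖M‖ := by
  simp only [frobNorm, frobSq, frobenius_norm_def, Real.norm_eq_abs, Real.sqrt_eq_rpow]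
  norm_num

lemma norm_sq_eq_frobSq (M : Matrix m p ℝ) : ‖M‖ ^ 2 = frobSq M := by
  rw [← frobNorm_eq_norm, frobNorm, Real.sq_sqrt (by unfold frobSq; positivity)]

lemma norm_mul_of_transpose_mul_self_eq_one [DecidableEq m] {U : Matrix l m ℝ} (hU : Uᵀ * U = 1)
    (M : Matrix m p ℝ) : ‖U * M‖ = ‖M‖ := by
  refine (sq_eq_sq₀ (norm_nonneg _) (norm_nonneg _)).mp ?_
  rw [norm_sq_eq_frobSq, norm_sq_eq_frobSq, frobSq_eq_trace, frobSq_eq_trace, transpose_mul,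
    Matrix.mul_assoc, ← Matrix.mul_assoc Uᵀ, hU, Matrix.one_mul]

lemma trace_mul_transpose_mul_transpose_mul (B : Matrix m p ℝ) (A : Matrix l m ℝ) :
    (B * Bᵀ * (Aᵀ * A)).trace = ‖A * B‖ ^ 2 := by
  rw [norm_sq_eq_frobSq, frobSq_eq_trace, transpose_mul, Matrix.mul_assoc Bᵀ,
    trace_mul_comm Bᵀ, trace_mul_comm (B * Bᵀ)]
  simp only [Matrix.mul_assoc]

end Frobenius

lemma Matrix.mul_eq_sum_mul_submatrix {l m ι κ R : Type*} [Fintype ι] [Fintype κ]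
    [NonUnitalNonAssocSemiring R] (A : Matrix l (ι × κ) R) (B : Matrix (ι × κ) m R) :
    A * B = ∑ i, A.submatrix id (Prod.mk i) * B.submatrix (Prod.mk i) id := by
  ext x y
  simp only [mul_apply, sum_apply, submatrix_apply, id, Fintype.sum_prod_type]

lemma blk_transpose_mul_self {n d : ℕ} (A : Matrix (Fin n × Fin d) (Fin n × Fin d) ℝ)
    (i j : Fin n) :
    blk (Aᵀ * A) i j = (A.submatrix id (Prod.mk i))ᵀ * A.submatrix id (Prod.mk j) :=
  submatrix_mul Aᵀ A (Prod.mk i) id (Prod.mk j) Function.bijective_id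

theorem stmt11 {d m n : ℕ}
    (B : Matrix (Fin n × Fin d) (Fin m) ℝ)
    (C : Matrix (Fin n × Fin d) (Fin n × Fin d) ℝ) (hC : C = B * Bᵀ)
    (X : Matrix (Fin n × Fin d) (Fin n × Fin d) ℝ)
    (hpsd : X.PosSemidef) (hdiag : ∀ i, blk X i i = 1) :
    (C * X).trace ≤ (∑ i : Fin n, frobNorm (fun a b => B (i, a) b)) ^ 2 := by
  obtain ⟨A, rfl⟩ := CStarAlgebra.nonneg_iff_eq_star_mul_self.mp hpsd.nonneg
  set U : Fin n → Matrix (Fin n × Fin d) (Fin d) ℝ := fun i => A.submatrix id (Prod.mk i)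
  have hU : ∀ i, (U i)ᵀ * U i = 1 := fun i => (blk_transpose_mul_self A i i).symm.trans (hdiag i)
  calc (C * (star A * A)).trace = ‖A * B‖ ^ 2 := by
        rw [hC]; exact trace_mul_transpose_mul_transpose_mul B A
    _ ≤ (∑ i, ‖U i * B.submatrix (Prod.mk i) id‖) ^ 2 := by
        rw [A.mul_eq_sum_mul_submatrix B]
        exact pow_le_pow_left₀ (norm_nonneg _) (norm_sum_le _ _) 2
    _ = (∑ i : Fin n, frobNorm (fun a b => B (i, a) b)) ^ 2 := by
        congr 1
        refine Finset.sum_congr rfl fun i _ => ?_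
        rw [norm_mul_of_transpose_mul_self_eq_one (hU i), ← frobNorm_eq_norm]
        rfl
end
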